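/- Let A be an (α,β)-Frobenius extension of B. A map tr^R : A → B is a right trace map (i.e., satisfies the right-module analogues R3, R4 and is a (B,B)-bimodule map for the actions b·x·b' = α^{-1}(b) x β^{-1}(b')) if and only if tr^R = β ∘ tr^L ∘ α for some left trace map tr^L. -/

import Mathlib

section

variable {A : Type u} [Ring A] (B : Subring A) (α : A ≃+* A) (β : B ≃+* B)

/-- `A` is an `(α,β)`-Frobenius extension of `B`: `A` is finitely generated projective as
a left `B`-module and there is an `(A,B)`-bimodule isomorphism `A ≅ Hom_B(_β A_α, B)`. -/
def IsTwistedFrobeniusExtension : Prop :=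
  Module.Finite B A ∧ Module.Projective B A ∧
    ∃ Φ : A → A →+ B,
      (∀ a a' : A, Φ (a + a') = Φ a + Φ a') ∧
      (∀ (a : A) (b : B) (x : A), Φ a ((β b : A) * x) = b * Φ a x) ∧
      (∀ (a a' x : A), Φ (a' * a) x = Φ a (x * α a')) ∧
      (∀ (a : A) (b : B) (x : A), Φ (a * (b : A)) x = Φ a x * b) ∧
      (∀ a : A, (∀ x : A, Φ a x = 0) → a = 0) ∧
      (∀ f : A →+ B, (∀ (b : B) (x : A), f ((β b : A) * x) = b * f x) →
        ∃ a : A, ∀ x : A, f x = Φ a x)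

/-- A left trace map: a `(B,B)`-bimodule map `_β A_α → B` satisfying conditions
L3 and L4. -/
def IsLeftTraceMap (tr : A →+ B) : Prop :=
  (∀ (b b' : B) (x : A), tr ((β b : A) * x * α (b' : A)) = b * tr x * b') ∧
  (∀ a : A, (∀ x : A, tr (x * a) = 0) → a = 0) ∧
  (∀ f : A →+ B, (∀ (b : B) (x : A), f ((β b : A) * x) = b * f x) →
    ∃ a : A, ∀ x : A, f x = tr (x * a))

/-- A right trace map: a `(B,B)`-bimodule map `_{α⁻¹} A_{β⁻¹} → B` satisfying conditions
R3 and R4. -/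
def IsRightTraceMap (tr : A →+ B) : Prop :=
  (∀ (b b' : B) (x : A), tr (α.symm (b : A) * x * (β.symm b' : A)) = b * tr x * b') ∧
  (∀ a : A, (∀ x : A, tr (a * x) = 0) → a = 0) ∧
  (∀ f : A →+ B, (∀ (b : B) (x : A), f (x * (β.symm b : A)) = f x * b) →
    ∃ a : A, ∀ x : A, f x = tr (a * x))

/-!
Writing `trR = β ∘ trL ∘ α` turns the axioms of a right trace map for `trR` into the bimodule
condition for `trL` together with the mirror images of L3 and L4: nondegeneracy in the left
factor, and representability of every right `α`-linear map as `trL (c * ·)`. So the theorem says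
that for a twisted bimodule map the two one-sided sets of conditions are equivalent, given the
Frobenius structure.

Both sets follow from a pair of dual bases `x = ∑ β (tr (x * yᵢ)) * vᵢ` and
`x = ∑ yᵢ * α (tr (vᵢ * x))`, and nondegeneracy on one side turns either expansion into the
other. A left trace map has the first expansion because `A` is finitely generated projective
over `B`: its coordinate functionals are represented by `tr`. Conversely, the left trace map
`Φ 1` of the Frobenius structure has a dual basis, and its second expansion is transported to
any map satisfying the mirrored conditions by representing the maps `Φ 1 (vᵢ * ·)`.
-/

variable {ι : Type*} [Fintype ι]

def IsTwistedBimoduleMap (tr : A →+ B) : Prop :=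
  ∀ (b b' : B) (x : A), tr ((β b : A) * x * α (b' : A)) = b * tr x * b'

def IsLeftNondegenerate (tr : A →+ B) : Prop :=
  ∀ a : A, (∀ x : A, tr (a * x) = 0) → a = 0

def IsRightNondegenerate (tr : A →+ B) : Prop :=
  ∀ a : A, (∀ x : A, tr (x * a) = 0) → a = 0

def RepresentsLeftLinear (tr : A →+ B) : Prop :=
  ∀ f : A →+ B, (∀ (b : B) (x : A), f ((β b : A) * x) = b * f x) →
    ∃ a : A, ∀ x : A, f x = tr (x * a)

def RepresentsRightLinear (tr : A →+ B) : Prop :=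
  ∀ f : A →+ B, (∀ (b : B) (x : A), f (x * α (b : A)) = f x * b) →
    ∃ a : A, ∀ x : A, f x = tr (a * x)

def IsLeftDualBasis (tr : A →+ B) (v y : ι → A) : Prop :=
  ∀ x : A, x = ∑ i, (β (tr (x * y i)) : A) * v i

def IsRightDualBasis (tr : A →+ B) (v y : ι → A) : Prop :=
  ∀ x : A, x = ∑ i, y i * α (tr (v i * x))

variable {B α β} {tr : A →+ B} {v y : ι → A}

namespace IsTwistedBimoduleMap

variable (htr : IsTwistedBimoduleMap B α β tr)
include htr

theorem map_mul_left (b : B) (x : A) : tr ((β b : A) * x) = b * tr x := by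
  simpa using htr b 1 x

theorem map_mul_right (b : B) (x : A) : tr (x * α (b : A)) = tr x * b := by
  simpa using htr 1 b x

end IsTwistedBimoduleMap

namespace IsLeftDualBasis

variable (hv : IsLeftDualBasis B β tr v y)
include hv

theorem isRightDualBasis (htr : IsTwistedBimoduleMap B α β tr)
    (hnd : IsRightNondegenerate B tr) : IsRightDualBasis B α tr v y := by
  intro z
  refine (sub_eq_zero.1 (hnd _ fun x => ?_)).symm
  rw [mul_sub, map_sub, sub_eq_zero]
  calc tr (x * ∑ i, y i * α (tr (v i * z)))
      = ∑ i, tr (x * y i) * tr (v i * z) := by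
        simp only [Finset.mul_sum, map_sum, ← mul_assoc, htr.map_mul_right]
    _ = ∑ i, tr ((β (tr (x * y i)) : A) * v i * z) := by
        simp only [mul_assoc, htr.map_mul_left]
    _ = tr (x * z) := by rw [← map_sum, ← Finset.sum_mul, ← hv x]

theorem isLeftNondegenerate : IsLeftNondegenerate B tr := by
  intro a ha
  rw [hv a]
  simp [ha]

theorem representsLeftLinear (htr : IsTwistedBimoduleMap B α β tr) :
    RepresentsLeftLinear B β tr := by
  intro f hf
  refine ⟨∑ i, y i * α (f (v i) : A), fun x => ?_⟩
  calc f x = ∑ i, tr (x * y i) * f (v i) := by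
        conv_lhs => rw [hv x]
        simp only [map_sum, hf]
    _ = tr (x * ∑ i, y i * α (f (v i) : A)) := by
        simp only [Finset.mul_sum, map_sum, ← mul_assoc, htr.map_mul_right]

end IsLeftDualBasis

namespace IsRightDualBasis

variable (hv : IsRightDualBasis B α tr v y)
include hv

theorem isLeftDualBasis (htr : IsTwistedBimoduleMap B α β tr)
    (hnd : IsLeftNondegenerate B tr) : IsLeftDualBasis B β tr v y := by
  intro x
  refine (sub_eq_zero.1 (hnd _ fun z => ?_)).symm
  rw [sub_mul, map_sub, sub_eq_zero]
  calc tr ((∑ i, (β (tr (x * y i)) : A) * v i) * z)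
      = ∑ i, tr (x * y i) * tr (v i * z) := by
        simp only [Finset.sum_mul, map_sum, mul_assoc, htr.map_mul_left]
    _ = ∑ i, tr (x * (y i * α (tr (v i * z)))) := by
        simp only [← mul_assoc, htr.map_mul_right]
    _ = tr (x * z) := by rw [← map_sum, ← Finset.mul_sum, ← hv z]

theorem isRightNondegenerate : IsRightNondegenerate B tr := by
  intro a ha
  rw [hv a]
  simp [ha]

theorem representsRightLinear (htr : IsTwistedBimoduleMap B α β tr) :
    RepresentsRightLinear B α tr := by
  intro f hf
  refine ⟨∑ i, (β (f (y i)) : A) * v i, fun z => ?_⟩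
  calc f z = ∑ i, f (y i) * tr (v i * z) := by
        conv_lhs => rw [hv z]
        simp only [map_sum, hf]
    _ = tr ((∑ i, (β (f (y i)) : A) * v i) * z) := by
        simp only [Finset.sum_mul, map_sum, mul_assoc, htr.map_mul_left]

end IsRightDualBasis

theorem exists_isLeftDualBasis [Module.Finite B A] [Module.Projective B A]
    (hrep : RepresentsLeftLinear B β tr) :
    ∃ (n : ℕ) (v y : Fin n → A), IsLeftDualBasis B β tr v y := by
  obtain ⟨n, f, g, -, -, hfg⟩ := Module.Finite.exists_comp_eq_id_of_projective B A
  have hcoord : ∀ i, ∃ y : A, ∀ x : A, β.symm (g x i) = tr (x * y) := fun i =>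
    hrep (β.symm.toAddMonoidHom.comp (LinearMap.proj i ∘ₗ g).toAddMonoidHom) fun b x => by
      change β.symm (g (β b • x) i) = b * β.symm (g x i)
      simp
  choose y hy using hcoord
  refine ⟨n, fun i => f (Pi.single i 1), y, fun x => ?_⟩
  calc x = f (g x) := (LinearMap.congr_fun hfg x).symm
    _ = ∑ i, g x i • f (Pi.single i 1) := by
        conv_lhs => rw [pi_eq_sum_univ' (g x)]
        simp only [map_sum, map_smul]
    _ = ∑ i, (β (tr (x * y i)) : A) * f (Pi.single i 1) := by simp [← hy, Subring.smul_def]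

theorem IsLeftTraceMap.exists_dualBasis [Module.Finite B A] [Module.Projective B A]
    (htr : IsLeftTraceMap B α β tr) :
    ∃ (n : ℕ) (v y : Fin n → A), IsLeftDualBasis B β tr v y ∧ IsRightDualBasis B α tr v y := by
  obtain ⟨n, v, y, hv⟩ := exists_isLeftDualBasis htr.2.2
  exact ⟨n, v, y, hv, hv.isRightDualBasis htr.1 htr.2.1⟩

theorem IsRightDualBasis.exists_isRightDualBasis {E : A →+ B}
    (hE : IsTwistedBimoduleMap B α β E) (hv : IsRightDualBasis B α E v y)
    (hrep : RepresentsRightLinear B α tr) :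
    ∃ s : ι → A, IsRightDualBasis B α tr s y := by
  have hs : ∀ i, ∃ s : A, ∀ z : A, E (v i * z) = tr (s * z) := fun i =>
    hrep (E.comp (AddMonoidHom.mulLeft (v i))) fun b z => by
      simpa [mul_assoc] using hE.map_mul_right b (v i * z)
  choose s hs using hs
  exact ⟨s, fun z => by simpa only [hs] using hv z⟩

theorem IsTwistedFrobeniusExtension.exists_isLeftTraceMap
    (h : IsTwistedFrobeniusExtension B α β) : ∃ E : A →+ B, IsLeftTraceMap B α β E := by
  obtain ⟨-, -, Φ, -, hΦl, hΦmul, hΦr, hΦnd, hΦrep⟩ := h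
  have hΦ : ∀ a x : A, Φ a x = Φ 1 (x * α a) := fun a x => by simpa using hΦmul 1 a x
  refine ⟨Φ 1, fun b b' x => ?_, fun a ha => ?_, fun f hf => ?_⟩
  · rw [← hΦ, ← one_mul (b' : A), hΦr, hΦl]
  · simpa using hΦnd (α.symm a) fun x => by simpa [hΦ] using ha x
  · obtain ⟨a, ha⟩ := hΦrep f hf
    exact ⟨α a, fun x => (ha x).trans (hΦ a x)⟩

section Twist

variable {trR : A →+ B} (h : ∀ x, trR x = β (tr (α x)))
include h

theorem isTwistedBimoduleMap_iff_of_apply_eq :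
    (∀ (b b' : B) (x : A), trR (α.symm (b : A) * x * (β.symm b' : A)) = b * trR x * b') ↔
      IsTwistedBimoduleMap B α β tr := by
  refine ⟨fun hR b b' x => β.injective ?_, fun htr b b' x => ?_⟩
  · simpa [h, map_mul] using hR (β b) (β b') (α.symm x)
  · simpa [h, map_mul] using congrArg β (htr (β.symm b) (β.symm b') (α x))

theorem isLeftNondegenerate_iff_of_apply_eq :
    (∀ a : A, (∀ x : A, trR (a * x) = 0) → a = 0) ↔ IsLeftNondegenerate B tr := by
  refine ⟨fun hR c hc => ?_, fun htr a ha => ?_⟩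
  · simpa using hR (α.symm c) fun x => by simp [h, hc]
  · simpa using htr (α a) fun x => by simpa [h] using ha (α.symm x)

theorem representsRightLinear_iff_of_apply_eq :
    (∀ f : A →+ B, (∀ (b : B) (x : A), f (x * (β.symm b : A)) = f x * b) →
      ∃ a : A, ∀ x : A, f x = trR (a * x)) ↔ RepresentsRightLinear B α tr := by
  refine ⟨fun hR f hf => ?_, fun htr f hf => ?_⟩
  · obtain ⟨a, ha⟩ := hR (β.toAddMonoidHom.comp (f.comp α.toAddMonoidHom)) fun b x => by
      simpa [map_mul] using congrArg β (hf (β.symm b) (α x))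
    exact ⟨α a, fun z => β.injective (by simpa [h] using ha (α.symm z))⟩
  · obtain ⟨c, hc⟩ := htr (β.symm.toAddMonoidHom.comp (f.comp α.symm.toAddMonoidHom)) fun b z => by
      simpa [map_mul] using congrArg β.symm (hf (β b) (α.symm z))
    exact ⟨α.symm c, fun x => by simpa [h] using congrArg β (hc (α x))⟩

theorem isRightTraceMap_iff_of_apply_eq :
    IsRightTraceMap B α β trR ↔
      IsTwistedBimoduleMap B α β tr ∧ IsLeftNondegenerate B tr ∧ RepresentsRightLinear B α tr :=
  and_congr (isTwistedBimoduleMap_iff_of_apply_eq h) <|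
    and_congr (isLeftNondegenerate_iff_of_apply_eq h) (representsRightLinear_iff_of_apply_eq h)

end Twist

theorem isRightTraceMap_iff_comp_leftTraceMap
    (hfrob : IsTwistedFrobeniusExtension B α β) (trR : A →+ B) :
    IsRightTraceMap B α β trR ↔
      ∃ trL : A →+ B, IsLeftTraceMap B α β trL ∧ ∀ x : A, trR x = β (trL (α x)) := by
  have : Module.Finite B A := hfrob.1
  have : Module.Projective B A := hfrob.2.1
  constructor
  · intro hR
    let trL : A →+ B := β.symm.toAddMonoidHom.comp (trR.comp α.symm.toAddMonoidHom)
    have htrR : ∀ x, trR x = β (trL (α x)) := fun x => by simp [trL]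
    obtain ⟨hbi, hnd, hrep⟩ := (isRightTraceMap_iff_of_apply_eq htrR).1 hR
    obtain ⟨E, hE⟩ := hfrob.exists_isLeftTraceMap
    obtain ⟨n, v, y, -, hEv⟩ := hE.exists_dualBasis
    obtain ⟨s, hs⟩ := hEv.exists_isRightDualBasis hE.1 hrep
    have hs' := hs.isLeftDualBasis hbi hnd
    exact ⟨trL, ⟨hbi, hs.isRightNondegenerate, hs'.representsLeftLinear hbi⟩, htrR⟩
  · rintro ⟨trL, hL, htrR⟩
    obtain ⟨n, v, y, hl, hr⟩ := hL.exists_dualBasis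
    exact (isRightTraceMap_iff_of_apply_eq htrR).2
      ⟨hL.1, hl.isLeftNondegenerate, hr.representsRightLinear hL.1⟩

end
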